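/- arXiv:1610.05343 — 5 statements merged into one kernel-verified Lean document; each statement's English description precedes it below -/
import Mathlib

section
/- Let C be a model knot complex and let t ∈ (0,2). Then there exists δ₀ > 0 such that for every δ with 0 < δ < δ₀, the set P_{t−δ} ∩ P_t contains exactly one element and the set P_{t+δ} ∩ P_t contains exactly one element; these elements p_t⁻ and p_t⁺ (the negative and positive pivot points of C at t) do not depend on the choice of such δ. -/
open scoped BigOperators

/-- A "pre-complex": a finite distinguished basis `B`, a grading `gr`,
bifiltration functions `alg` and `alex`, and a differential recorded by its
matrix `d` over the field `F₂ = ZMod 2`:  `∂ x = ∑ y, d x y • y`. -/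
structure PreComplex where
  B : Type
  fB : Fintype B
  dB : DecidableEq B
  gr : B → ℤ
  alg : B → ℤ
  alex : B → ℤ
  d : B → B → ZMod 2

attribute [instance] PreComplex.fB PreComplex.dB

namespace PreComplex

variable (C : PreComplex)

/-- Chains: F₂-linear combinations of basis elements. -/
abbrev Chain : Type := C.B → ZMod 2

/-- The boundary of a chain, extending `∂ x = ∑ y, d x y • y` linearly. -/
def bdry (c : C.Chain) : C.Chain := fun y => ∑ x, c x * C.d x y

/-- A chain is homogeneous of grading `k`. -/
def isGraded (c : C.Chain) (k : ℤ) : Prop := ∀ x, c x ≠ 0 → C.gr x = k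

def isCycle (c : C.Chain) : Prop := C.bdry c = 0

def isBoundary (c : C.Chain) : Prop := ∃ w : C.Chain, C.bdry w = c

/-- A cycle of grading 0 representing the nonzero class of `H₀(C)`. -/
def GenCycle (z : C.Chain) : Prop :=
  C.isCycle z ∧ C.isGraded z 0 ∧ ¬ C.isBoundary z

/-- The bifiltration level of a basis element. -/
def lev (x : C.B) : ℤ × ℤ := (C.alg x, C.alex x)

/-- A model knot complex: `∂ ∘ ∂ = 0`; `∂` drops the grading by one and does
not increase either filtration; the homology is one dimensional, concentrated
in grading 0; and the minimum over cycles representing the generator of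
`H₀(C)` of their maximal `alg` (resp. `alex`) filtration level is 0. -/
def IsModel : Prop :=
  (∀ x z, (∑ y, C.d x y * C.d y z) = 0) ∧
  (∀ x y, C.d x y ≠ 0 → C.gr y = C.gr x - 1 ∧ C.alg y ≤ C.alg x ∧ C.alex y ≤ C.alex x) ∧
  (∀ k : ℤ, k ≠ 0 → ∀ z : C.Chain, C.isCycle z → C.isGraded z k → C.isBoundary z) ∧
  (∃ z : C.Chain, C.GenCycle z) ∧
  (∀ z z' : C.Chain, C.GenCycle z → C.GenCycle z' → C.isBoundary (z + z')) ∧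
  (∃ z : C.Chain, C.GenCycle z ∧ ∀ x, z x ≠ 0 → C.alg x ≤ 0) ∧
  (∀ z : C.Chain, C.GenCycle z → ∃ x, z x ≠ 0 ∧ 0 ≤ C.alg x) ∧
  (∃ z : C.Chain, C.GenCycle z ∧ ∀ x, z x ≠ 0 → C.alex x ≤ 0) ∧
  (∀ z : C.Chain, C.GenCycle z → ∃ x, z x ≠ 0 ∧ 0 ≤ C.alex x)

/-- An acyclic complex: conditions (i) and (ii) hold but the homology vanishes. -/
def IsAcyclic : Prop :=
  (∀ x z, (∑ y, C.d x y * C.d y z) = 0) ∧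
  (∀ x y, C.d x y ≠ 0 → C.gr y = C.gr x - 1 ∧ C.alg y ≤ C.alg x ∧ C.alex y ≤ C.alex x) ∧
  (∀ z : C.Chain, C.isCycle z → C.isBoundary z)

end PreComplex

/-- `f_t(i,j) = (t/2)·j + (1 − t/2)·i`. -/
noncomputable def fval (t : ℝ) (p : ℤ × ℤ) : ℝ :=
  (t / 2) * (p.2 : ℝ) + (1 - t / 2) * (p.1 : ℝ)

namespace PreComplex

variable (C : PreComplex)

/-- A chain lies in the subcomplex `F_{t,s}`. -/
def inF (t s : ℝ) (c : C.Chain) : Prop :=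
  ∀ x, c x ≠ 0 → fval t (C.lev x) ≤ s

/-- `γ_C(t)`: the minimal `s` such that `H₀(F_{t,s}) → H₀(C)` is surjective,
i.e. such that `F_{t,s}` contains a cycle representing the generator. -/
noncomputable def gamma (t : ℝ) : ℝ :=
  sInf {s : ℝ | ∃ z : C.Chain, C.GenCycle z ∧ C.inF t s z}

/-- The Upsilon invariant `Υ_C(t) = −2 γ_C(t)`. -/
noncomputable def Upsilon (t : ℝ) : ℝ := -2 * C.gamma t

/-- `P`: the set of bifiltration levels of basis elements. -/
def PSet : Set (ℤ × ℤ) := Set.range C.lev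

/-- `P_u = { p ∈ P : f_u(p) = γ_C(u) }`. -/
def Pt (u : ℝ) : Set (ℤ × ℤ) := {p ∈ C.PSet | fval u p = C.gamma u}

/-- `p` is the negative pivot point of `C` at `t`. -/
def IsNegPivot (t : ℝ) (p : ℤ × ℤ) : Prop :=
  ∃ δ₀ > (0 : ℝ), ∀ δ : ℝ, 0 < δ → δ < δ₀ → C.Pt (t - δ) ∩ C.Pt t = {p}

/-- `p` is the positive pivot point of `C` at `t`. -/
def IsPosPivot (t : ℝ) (p : ℤ × ℤ) : Prop :=
  ∃ δ₀ > (0 : ℝ), ∀ δ : ℝ, 0 < δ → δ < δ₀ → C.Pt (t + δ) ∩ C.Pt t = {p}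

/-- Cycles in `F_{t−δ, γ_C(t−δ)}` representing the nonzero class of `H₀(C)`. -/
def ZminusAt (t δ : ℝ) : Set C.Chain :=
  {z | C.GenCycle z ∧ C.inF (t - δ) (C.gamma (t - δ)) z}

/-- Cycles in `F_{t+δ, γ_C(t+δ)}` representing the nonzero class of `H₀(C)`. -/
def ZplusAt (t δ : ℝ) : Set C.Chain :=
  {z | C.GenCycle z ∧ C.inF (t + δ) (C.gamma (t + δ)) z}

/-- `Z⁻`: the (eventual, for all sufficiently small `δ > 0`) set of cycles in
`F_{t−δ, γ_C(t−δ)}` representing the nonzero class of `H₀(C)`. -/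
def Zminus (t : ℝ) : Set C.Chain :=
  {z | ∃ δ₀ > (0 : ℝ), ∀ δ : ℝ, 0 < δ → δ < δ₀ → z ∈ C.ZminusAt t δ}

/-- `Z⁺`: the (eventual, for all sufficiently small `δ > 0`) set of cycles in
`F_{t+δ, γ_C(t+δ)}` representing the nonzero class of `H₀(C)`. -/
def Zplus (t : ℝ) : Set C.Chain :=
  {z | ∃ δ₀ > (0 : ℝ), ∀ δ : ℝ, 0 < δ → δ < δ₀ → z ∈ C.ZplusAt t δ}

/-- A basis element lies in the subcomplex `F_{t,γ_C(t)} + F_{s,r}`. -/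
def inRegion (t s r : ℝ) (x : C.B) : Prop :=
  fval t (C.lev x) ≤ C.gamma t ∨ fval s (C.lev x) ≤ r

/-- `z` and `z'` represent the same homology class in `H₀(F_{t,γ_C(t)} + F_{s,r})`
(over F₂ the difference `z − z'` is `z + z'`). -/
def sameClass (t s r : ℝ) (z z' : C.Chain) : Prop :=
  (∀ x, z x ≠ 0 → C.inRegion t s r x) ∧
  (∀ x, z' x ≠ 0 → C.inRegion t s r x) ∧
  ∃ w : C.Chain, (∀ x, w x ≠ 0 → C.inRegion t s r x) ∧ C.bdry w = z + z'

/-- The set of `r` for which some `z⁻ ∈ Z⁻` and `z⁺ ∈ Z⁺` represent the same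
class in `H₀(F_{t,γ_C(t)} + F_{s,r})`. -/
def gamma2Set (t s : ℝ) : Set ℝ :=
  {r | ∃ zm ∈ C.Zminus t, ∃ zp ∈ C.Zplus t, C.sameClass t s r zm zp}

/-- `γ²_{C,t}(s)`, as an extended real: the minimum of `gamma2Set`
(`−∞` if the condition holds for every `r`). -/
noncomputable def gamma2 (t s : ℝ) : EReal :=
  sInf ((fun r : ℝ => (r : EReal)) '' C.gamma2Set t s)

/-- `Υ²_{C,t}(s) = −2 (γ²_{C,t}(s) − γ_C(t))`. -/
noncomputable def Upsilon2 (t s : ℝ) : EReal :=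
  (-2 : EReal) * (C.gamma2 t s - (C.gamma t : EReal))

end PreComplex

/-- The jump of the derivative of `f` at `t`: the right-hand derivative minus
the left-hand derivative. -/
noncomputable def derivJump (f : ℝ → ℝ) (t : ℝ) : ℝ :=
  derivWithin f (Set.Ici t) t - derivWithin f (Set.Iic t) t

/-- Direct sum of two pre-complexes. -/
def PreComplex.dsum (C A : PreComplex) : PreComplex where
  B := C.B ⊕ A.B
  fB := inferInstance
  dB := inferInstance
  gr := Sum.elim C.gr A.gr
  alg := Sum.elim C.alg A.alg
  alex := Sum.elim C.alex A.alex
  d := fun x y =>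
    match x, y with
    | Sum.inl x, Sum.inl y => C.d x y
    | Sum.inr x, Sum.inr y => A.d x y
    | _, _ => 0

/-- Tensor product of two pre-complexes. -/
def PreComplex.tensor (C₁ C₂ : PreComplex) : PreComplex where
  B := C₁.B × C₂.B
  fB := inferInstance
  dB := inferInstance
  gr := fun x => C₁.gr x.1 + C₂.gr x.2
  alg := fun x => C₁.alg x.1 + C₂.alg x.2
  alex := fun x => C₁.alex x.1 + C₂.alex x.2
  d := fun x y =>
    (if x.2 = y.2 then C₁.d x.1 y.1 else 0) + (if x.1 = y.1 then C₂.d x.2 y.2 else 0)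

/-- An isomorphism of pre-complexes: a bijection of the distinguished bases
preserving `gr`, `alg`, `alex`, whose linear extension commutes with the
differentials. -/
def PreComplex.Iso (C₁ C₂ : PreComplex) : Prop :=
  ∃ e : C₁.B ≃ C₂.B,
    (∀ x, C₂.gr (e x) = C₁.gr x) ∧
    (∀ x, C₂.alg (e x) = C₁.alg x) ∧
    (∀ x, C₂.alex (e x) = C₁.alex x) ∧
    (∀ x y, C₂.d (e x) (e y) = C₁.d x y)

/-- Stable equivalence of pre-complexes: isomorphism after adding acyclic
summands. -/
def PreComplex.StablyEquiv (C₁ C₂ : PreComplex) : Prop :=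
  ∃ A₁ A₂ : PreComplex, A₁.IsAcyclic ∧ A₂.IsAcyclic ∧ (C₁.dsum A₁).Iso (C₂.dsum A₂)

section AuxPivot

open Finset

/-- Support of a chain as a finset. -/
noncomputable def suppF (C : PreComplex) (z : C.Chain) : Finset C.B :=
  Finset.univ.filter (fun x => z x ≠ 0)

lemma mem_suppF {C : PreComplex} {z : C.Chain} {x : C.B} :
    x ∈ suppF C z ↔ z x ≠ 0 := by simp [suppF]

/-- The finset of generating cycles. -/
noncomputable def genF (C : PreComplex) : Finset C.Chain :=
  @Finset.filter _ (fun z => C.GenCycle z) (Classical.decPred _) Finset.univ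

lemma mem_genF {C : PreComplex} {z : C.Chain} : z ∈ genF C ↔ C.GenCycle z := by
  simp [genF]

lemma suppF_nonempty {C : PreComplex} {z : C.Chain} (hz : C.GenCycle z) :
    (suppF C z).Nonempty := by
  have hz0 : z ≠ 0 := by
    intro h
    exact hz.2.2 ⟨0, by funext y; simp [PreComplex.bdry, h]⟩
  obtain ⟨x, hx⟩ := Function.ne_iff.mp hz0
  exact ⟨x, mem_suppF.2 hx⟩

lemma genF_nonempty (C : PreComplex) (hC : C.IsModel) : (genF C).Nonempty := by
  obtain ⟨z, hz⟩ := hC.2.2.2.1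
  exact ⟨z, mem_genF.2 hz⟩

/-- The maximal `f`-value of the support of a chain. -/
noncomputable def mval (C : PreComplex) (z : C.Chain) (u : ℝ) : ℝ :=
  if h : (suppF C z).Nonempty then (suppF C z).sup' h (fun x => fval u (C.lev x)) else 0

lemma mval_eq {C : PreComplex} {z : C.Chain} (h : (suppF C z).Nonempty) (u : ℝ) :
    mval C z u = (suppF C z).sup' h (fun x => fval u (C.lev x)) := dif_pos h

lemma gamma_eq (C : PreComplex) (hC : C.IsModel) (u : ℝ) :
    C.gamma u = (genF C).inf' (genF_nonempty C hC) (fun z => mval C z u) := by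
  set I := (genF C).inf' (genF_nonempty C hC) (fun z => mval C z u) with hI
  have hset : {s : ℝ | ∃ z : C.Chain, C.GenCycle z ∧ C.inF u s z} = Set.Ici I := by
    ext s
    simp only [Set.mem_setOf_eq, Set.mem_Ici]
    constructor
    · rintro ⟨z, hz, hin⟩
      have hzF : z ∈ genF C := mem_genF.2 hz
      have hs := suppF_nonempty hz
      refine (Finset.inf'_le _ hzF).trans ?_
      rw [mval_eq hs]
      exact Finset.sup'_le _ _ (fun x hx => hin x (mem_suppF.1 hx))
    · intro hs
      obtain ⟨z, hzF, hz⟩ := Finset.exists_mem_eq_inf' (genF_nonempty C hC)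
        (fun z => mval C z u)
      refine ⟨z, mem_genF.1 hzF, fun x hx => ?_⟩
      have hne := suppF_nonempty (mem_genF.1 hzF)
      calc fval u (C.lev x) ≤ mval C z u := by
            rw [mval_eq hne]; exact Finset.le_sup' (fun x => fval u (C.lev x)) (mem_suppF.2 hx)
        _ = I := hz.symm
        _ ≤ s := hs
  unfold PreComplex.gamma
  rw [hset, csInf_Ici]

/-- The slope of `u ↦ fval u p`. -/
noncomputable def slo (p : ℤ × ℤ) : ℝ := ((p.2 : ℝ) - (p.1 : ℝ)) / 2

lemma fval_affine (u : ℝ) (p : ℤ × ℤ) : fval u p = (p.1 : ℝ) + u * slo p := by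
  simp only [fval, slo]; ring

lemma eq_of_fval_eq_two {p q : ℤ × ℤ} {u v : ℝ} (huv : u ≠ v)
    (h1 : fval u p = fval u q) (h2 : fval v p = fval v q) : p = q := by
  rw [fval_affine, fval_affine] at h1 h2
  have hslo : slo p = slo q := by
    have h3 : (u - v) * (slo p - slo q) = 0 := by linarith
    rcases mul_eq_zero.1 h3 with h | h
    · exact absurd (sub_eq_zero.1 h) huv
    · linarith [sub_eq_zero.1 h]
  have h4 : (p.1 : ℝ) = (q.1 : ℝ) := by rw [hslo] at h1; linarith
  have h5 : (p.2 : ℝ) = (q.2 : ℝ) := by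
    simp only [slo] at hslo; linarith
  have : p.1 = q.1 := by exact_mod_cast h4
  have : p.2 = q.2 := by exact_mod_cast h5
  exact Prod.ext ‹p.1 = q.1› ‹p.2 = q.2›

/-- The finset of bifiltration levels. -/
noncomputable def QF (C : PreComplex) : Finset (ℤ × ℤ) :=
  Finset.image C.lev Finset.univ

lemma lev_mem_QF (C : PreComplex) (x : C.B) : C.lev x ∈ QF C :=
  Finset.mem_image_of_mem _ (Finset.mem_univ x)

/-- Crossing times of the lines `u ↦ fval u p`, `p` a level. -/
noncomputable def crossT (C : PreComplex) (t : ℝ) : Finset ℝ :=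
  (QF C ×ˢ QF C).image (fun pq =>
    if slo pq.1 = slo pq.2 then t
    else ((pq.2.1 : ℝ) - (pq.1.1 : ℝ)) / (slo pq.1 - slo pq.2))

noncomputable def del0 (C : PreComplex) (t : ℝ) : ℝ :=
  if h : ((crossT C t).filter (· ≠ t)).Nonempty then
    ((crossT C t).filter (· ≠ t)).inf' h (fun w => |t - w|) else 1

lemma del0_pos (C : PreComplex) (t : ℝ) : 0 < del0 C t := by
  unfold del0
  split_ifs with h
  · rw [Finset.lt_inf'_iff]
    intro w hw
    have : w ≠ t := (Finset.mem_filter.1 hw).2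
    rw [abs_pos, sub_ne_zero]
    exact fun h' => this h'.symm
  · norm_num

lemma del0_le (C : PreComplex) (t : ℝ) {w : ℝ} (hw : w ∈ crossT C t) (hwt : w ≠ t) :
    del0 C t ≤ |t - w| := by
  have hmem : w ∈ (crossT C t).filter (· ≠ t) := Finset.mem_filter.2 ⟨hw, hwt⟩
  unfold del0
  rw [dif_pos ⟨w, hmem⟩]
  exact Finset.inf'_le _ hmem

lemma no_cross (C : PreComplex) (t : ℝ) {p q : ℤ × ℤ} (hp : p ∈ QF C) (hq : q ∈ QF C)
    {u : ℝ} (hut : u ≠ t) (hud : |t - u| < del0 C t) (h : fval u p = fval u q) :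
    ∀ v, fval v p = fval v q := by
  intro v
  by_cases hs : slo p = slo q
  · rw [fval_affine, fval_affine] at h ⊢
    rw [hs] at h ⊢
    linarith
  · exfalso
    have hs0 : slo p - slo q ≠ 0 := sub_ne_zero.2 hs
    have hu : u = ((q.1 : ℝ) - (p.1 : ℝ)) / (slo p - slo q) := by
      rw [eq_div_iff hs0]
      rw [fval_affine, fval_affine] at h
      ring_nf
      nlinarith [h]
    have hwmem : u ∈ crossT C t := by
      rw [hu]
      apply Finset.mem_image.2
      exact ⟨(p, q), Finset.mem_product.2 ⟨hp, hq⟩, if_neg hs⟩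
    exact absurd (del0_le C t hwmem hut) (not_le.2 hud)

lemma affine_ext {c s a b : ℝ} (hab : a < b)
    (h : ∀ u, a < u → u < b → 0 ≤ c + u * s) : 0 ≤ c + a * s ∧ 0 ≤ c + b * s := by
  have cont : Continuous (fun u : ℝ => c + u * s) := by continuity
  constructor
  · have lim : Filter.Tendsto (fun u : ℝ => c + u * s) (nhdsWithin a (Set.Ioi a))
        (nhds (c + a * s)) := (cont.tendsto a).mono_left nhdsWithin_le_nhds
    refine ge_of_tendsto lim ?_
    filter_upwards [Ioo_mem_nhdsGT_of_mem (Set.left_mem_Ico.mpr hab)] with u hu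
    exact h u hu.1 hu.2
  · have lim : Filter.Tendsto (fun u : ℝ => c + u * s) (nhdsWithin b (Set.Iio b))
        (nhds (c + b * s)) := (cont.tendsto b).mono_left nhdsWithin_le_nhds
    refine ge_of_tendsto lim ?_
    filter_upwards [Ioo_mem_nhdsLT_of_mem (Set.right_mem_Ioc.mpr hab)] with u hu
    exact h u hu.1 hu.2

lemma ext_fval {p q : ℤ × ℤ} {a b : ℝ} (hab : a < b)
    (h : ∀ u, a < u → u < b → fval u p ≤ fval u q) :
    fval a p ≤ fval a q ∧ fval b p ≤ fval b q := by
  have := affine_ext (c := (q.1 : ℝ) - (p.1 : ℝ)) (s := slo q - slo p) hab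
    (fun u h1 h2 => by
      have := h u h1 h2
      rw [fval_affine, fval_affine] at this
      nlinarith [this])
  constructor <;> rw [fval_affine, fval_affine] <;> nlinarith [this.1, this.2]

lemma orderPres {C : PreComplex} {a b : ℝ}
    (hcr : ∀ p ∈ QF C, ∀ q ∈ QF C, ∀ u, a < u → u < b → fval u p = fval u q →
      ∀ v, fval v p = fval v q) :
    ∀ p ∈ QF C, ∀ q ∈ QF C, ∀ u v, a < u → u < b → a < v → v < b →
      fval u p ≤ fval u q → fval v p ≤ fval v q := by
  intro p hp q hq u v hau hub hav hvb hle
  by_contra hlt'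
  push_neg at hlt'
  by_cases hs : slo p = slo q
  · rw [fval_affine, fval_affine] at hle hlt'
    rw [hs] at hle hlt'
    linarith
  · have hs0 : slo p - slo q ≠ 0 := sub_ne_zero.2 hs
    set w := ((q.1 : ℝ) - (p.1 : ℝ)) / (slo p - slo q) with hwdef
    have hws : w * (slo p - slo q) = (q.1 : ℝ) - (p.1 : ℝ) := div_mul_cancel₀ _ hs0
    have hfw : fval w p = fval w q := by
      rw [fval_affine, fval_affine]
      have : w * slo p - w * slo q = (q.1 : ℝ) - (p.1 : ℝ) := by
        rw [← hws]; ring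
      linarith
    have hgu : (p.1 : ℝ) + u * slo p ≤ (q.1 : ℝ) + u * slo q := by
      rw [fval_affine, fval_affine] at hle; exact hle
    have hgv : (q.1 : ℝ) + v * slo q < (p.1 : ℝ) + v * slo p := by
      rw [fval_affine, fval_affine] at hlt'; exact hlt'
    have hwin : a < w ∧ w < b := by
      rcases lt_or_gt_of_ne hs0 with hneg | hpos
      · -- s < 0 : v < w ≤ u
        have h1 : v < w := by
          by_contra hcon
          push_neg at hcon
          nlinarith [mul_nonpos_of_nonneg_of_nonpos (sub_nonneg.2 hcon) (le_of_lt hneg :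
              slo p - slo q ≤ 0), hws, hgv]
        have h2 : w ≤ u := by
          by_contra hcon
          push_neg at hcon
          nlinarith [mul_neg_of_pos_of_neg (sub_pos.2 hcon) hneg, hws, hgu]
        exact ⟨lt_trans hav h1, lt_of_le_of_lt h2 hub⟩
      · -- s > 0 : u ≤ w < v
        have h1 : u ≤ w := by
          by_contra hcon
          push_neg at hcon
          nlinarith [mul_pos (sub_pos.2 hcon) hpos, hws, hgu]
        have h2 : w < v := by
          by_contra hcon
          push_neg at hcon
          nlinarith [mul_nonneg (sub_nonneg.2 hcon) (le_of_lt hpos), hws, hgv]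
        exact ⟨lt_of_lt_of_le hau h1, lt_trans h2 hvb⟩
    have := hcr p hp q hq w hwin.1 hwin.2 hfw v
    rw [fval_affine, fval_affine] at this
    linarith

lemma side_lemma (C : PreComplex) (hC : C.IsModel) (a b : ℝ) (hab : a < b)
    (hcr : ∀ p ∈ QF C, ∀ q ∈ QF C, ∀ u, a < u → u < b → fval u p = fval u q →
      ∀ v, fval v p = fval v q) :
    ∃ p ∈ C.PSet, (∀ u, a < u → u < b → C.gamma u = fval u p) ∧
      C.gamma a = fval a p ∧ C.gamma b = fval b p := by
  have hOP := orderPres hcr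
  set u₀ := (a + b) / 2 with hu₀
  have hau₀ : a < u₀ := by simp only [hu₀]; linarith
  have hub₀ : u₀ < b := by simp only [hu₀]; linarith
  have key1 : ∀ z ∈ genF C, ∃ x : C.B, z x ≠ 0 ∧
      (∀ u, a < u → u < b → mval C z u = fval u (C.lev x)) ∧
      (∀ u, a < u → u < b → ∀ x', z x' ≠ 0 → fval u (C.lev x') ≤ fval u (C.lev x)) := by
    intro z hzF
    have hz : C.GenCycle z := mem_genF.1 hzF
    have hsne := suppF_nonempty hz
    obtain ⟨x, hxs, hx⟩ := Finset.exists_mem_eq_sup' hsne (fun x => fval u₀ (C.lev x))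
    have h3 : ∀ u, a < u → u < b → ∀ x', z x' ≠ 0 →
        fval u (C.lev x') ≤ fval u (C.lev x) := by
      intro u hau hub x' hx'
      have h0 : fval u₀ (C.lev x') ≤ fval u₀ (C.lev x) := by
        rw [← hx]
        exact Finset.le_sup' (fun x => fval u₀ (C.lev x)) (mem_suppF.2 hx')
      exact hOP _ (lev_mem_QF C x') _ (lev_mem_QF C x) u₀ u hau₀ hub₀ hau hub h0
    refine ⟨x, mem_suppF.1 hxs, fun u hau hub => ?_, h3⟩
    rw [mval_eq hsne]
    apply le_antisymm
    · exact Finset.sup'_le _ _ (fun x' hx' => h3 u hau hub x' (mem_suppF.1 hx'))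
    · exact Finset.le_sup' (fun x => fval u (C.lev x)) hxs
  obtain ⟨z₀, hz₀F, hz₀⟩ := Finset.exists_mem_eq_inf' (genF_nonempty C hC)
    (fun z => mval C z u₀)
  obtain ⟨x₀, hx₀ne, hmz₀, hdomz₀⟩ := key1 z₀ hz₀F
  set p := C.lev x₀ with hp
  have main1 : ∀ u, a < u → u < b → C.gamma u = fval u p := by
    intro u hau hub
    rw [gamma_eq C hC u]
    apply le_antisymm
    · exact (Finset.inf'_le _ hz₀F).trans_eq (hmz₀ u hau hub)
    · apply Finset.le_inf'
      intro z hzF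
      obtain ⟨x, hxne, hm, _⟩ := key1 z hzF
      rw [hm u hau hub]
      apply hOP _ (lev_mem_QF C x₀) _ (lev_mem_QF C x) u₀ u hau₀ hub₀ hau hub
      calc fval u₀ p = mval C z₀ u₀ := (hmz₀ u₀ hau₀ hub₀).symm
        _ ≤ mval C z u₀ := by rw [← hz₀]; exact Finset.inf'_le _ hzF
        _ = fval u₀ (C.lev x) := hm u₀ hau₀ hub₀
  have main2 : ∀ e : ℝ, e = a ∨ e = b → C.gamma e = fval e p := by
    intro e he
    apply le_antisymm
    · rw [gamma_eq C hC e]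
      refine (Finset.inf'_le _ hz₀F).trans ?_
      rw [mval_eq (suppF_nonempty (mem_genF.1 hz₀F))]
      apply Finset.sup'_le
      intro x' hx'
      have hu : ∀ u, a < u → u < b → fval u (C.lev x') ≤ fval u p :=
        fun u h1 h2 => hdomz₀ u h1 h2 x' (mem_suppF.1 hx')
      rcases he with rfl | rfl
      · exact (ext_fval hab hu).1
      · exact (ext_fval hab hu).2
    · rw [gamma_eq C hC e]
      obtain ⟨z₁, hz₁F, hz₁⟩ := Finset.exists_mem_eq_inf' (genF_nonempty C hC)
        (fun z => mval C z e)
      rw [hz₁]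
      obtain ⟨x₁, hx₁ne, hm₁, _⟩ := key1 z₁ hz₁F
      have hle : ∀ u, a < u → u < b → fval u p ≤ fval u (C.lev x₁) := by
        intro u h1 h2
        rw [← hm₁ u h1 h2, ← main1 u h1 h2, gamma_eq C hC u]
        exact Finset.inf'_le _ hz₁F
      have hend : fval e p ≤ fval e (C.lev x₁) := by
        rcases he with rfl | rfl
        · exact (ext_fval hab hle).1
        · exact (ext_fval hab hle).2
      refine hend.trans ?_
      rw [mval_eq (suppF_nonempty (mem_genF.1 hz₁F))]
      exact Finset.le_sup' (fun x => fval e (C.lev x)) (mem_suppF.2 hx₁ne)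
  exact ⟨p, ⟨x₀, rfl⟩, main1, main2 a (Or.inl rfl), main2 b (Or.inr rfl)⟩

end AuxPivot

/-- For a model knot complex `C` and `t ∈ (0,2)` there is `δ₀ > 0`
such that for every `0 < δ < δ₀` the sets `P_{t−δ} ∩ P_t` and `P_{t+δ} ∩ P_t`
are singletons `{p_t⁻}` and `{p_t⁺}`, whose elements do not depend on `δ`. -/
theorem pivot_points_exist (C : PreComplex) (hC : C.IsModel)
    (t : ℝ) (ht : t ∈ Set.Ioo (0 : ℝ) 2) :
    ∃ δ₀ > (0 : ℝ), ∃ pm pp : ℤ × ℤ,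
      ∀ δ : ℝ, 0 < δ → δ < δ₀ →
        C.Pt (t - δ) ∩ C.Pt t = {pm} ∧ C.Pt (t + δ) ∩ C.Pt t = {pp} := by
  set d := del0 C t with hd
  have hdpos : 0 < d := del0_pos C t
  have hcrL : ∀ p ∈ QF C, ∀ q ∈ QF C, ∀ u, t - d < u → u < t →
      fval u p = fval u q → ∀ v, fval v p = fval v q := by
    intro p hp q hq u h1 h2 h
    exact no_cross C t hp hq (ne_of_lt h2) (by rw [abs_of_pos (by linarith)]; linarith) h
  have hcrR : ∀ p ∈ QF C, ∀ q ∈ QF C, ∀ u, t < u → u < t + d →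
      fval u p = fval u q → ∀ v, fval v p = fval v q := by
    intro p hp q hq u h1 h2 h
    exact no_cross C t hp hq (ne_of_gt h1) (by rw [abs_of_neg (by linarith)]; linarith) h
  obtain ⟨pm, hpmP, hpm1, hpma, hpmb⟩ := side_lemma C hC (t - d) t (by linarith) hcrL
  obtain ⟨pp, hppP, hpp1, hppa, hppb⟩ := side_lemma C hC t (t + d) (by linarith) hcrR
  refine ⟨d, hdpos, pm, pp, fun δ hδ0 hδd => ⟨?_, ?_⟩⟩
  · apply Set.eq_singleton_iff_unique_mem.2
    constructor
    · exact ⟨⟨hpmP, (hpm1 (t - δ) (by linarith) (by linarith)).symm⟩, ⟨hpmP, hpmb.symm⟩⟩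
    · rintro q ⟨⟨hqP, hq1⟩, ⟨-, hq2⟩⟩
      exact eq_of_fval_eq_two (u := t - δ) (v := t) (by intro h; linarith)
        (hq1.trans (hpm1 (t - δ) (by linarith) (by linarith)))
        (hq2.trans hpmb)
  · apply Set.eq_singleton_iff_unique_mem.2
    constructor
    · exact ⟨⟨hppP, (hpp1 (t + δ) (by linarith) (by linarith)).symm⟩, ⟨hppP, hppa.symm⟩⟩
    · rintro q ⟨⟨hqP, hq1⟩, ⟨-, hq2⟩⟩
      exact eq_of_fval_eq_two (u := t + δ) (v := t) (by intro h; linarith)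
        (hq1.trans (hpp1 (t + δ) (by linarith) (by linarith)))
        (hq2.trans hppa)
end

section
/- Let C be a model knot complex and let t ∈ (0,2). For all sufficiently small δ > 0, every cycle in Z⁻ contains (with nonzero coefficient) a basis element whose bifiltration level is the negative pivot point p_t⁻, and every cycle in Z⁺ contains a basis element whose bifiltration level is the positive pivot point p_t⁺. -/
open scoped BigOperators

open Finset in
lemma PreComplex.genCycle_ne_zero (C : PreComplex) {z : C.Chain} (hz : C.GenCycle z) :
    ∃ x, z x ≠ 0 := by
  by_contra h
  push_neg at h
  have hz0 : z = 0 := funext fun x => h x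
  exact hz.2.2 ⟨0, by rw [hz0]; funext y; simp [PreComplex.bdry]⟩

open Finset in
lemma PreComplex.gamma_key (C : PreComplex) (hex : ∃ z, C.GenCycle z) (u : ℝ) :
    (∃ z, C.GenCycle z ∧ C.inF u (C.gamma u) z) ∧
    (∀ s : ℝ, ∀ z : C.Chain, C.GenCycle z → C.inF u s z → C.gamma u ≤ s) ∧
    (∀ z : C.Chain, C.GenCycle z → C.inF u (C.gamma u) z →
      ∃ x, z x ≠ 0 ∧ fval u (C.lev x) = C.gamma u) := by
  classical
  obtain ⟨z₀, hz₀⟩ := hex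
  obtain ⟨x₀, -⟩ := C.genCycle_ne_zero hz₀
  have hBne : (univ : Finset C.B).Nonempty := ⟨x₀, mem_univ _⟩
  have hgam : C.gamma u = sInf {s : ℝ | ∃ z, C.GenCycle z ∧ C.inF u s z} := rfl
  set L : ℝ := univ.inf' hBne (fun x => fval u (C.lev x)) with hL
  have hLlb : ∀ s ∈ {s : ℝ | ∃ z, C.GenCycle z ∧ C.inF u s z}, L ≤ s := by
    rintro s ⟨z, hz, hf⟩
    obtain ⟨x, hx⟩ := C.genCycle_ne_zero hz
    exact le_trans (inf'_le _ (mem_univ x)) (hf x hx)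
  have hbdd : BddBelow {s : ℝ | ∃ z, C.GenCycle z ∧ C.inF u s z} := ⟨L, hLlb⟩
  have part2 : ∀ s : ℝ, ∀ z : C.Chain, C.GenCycle z → C.inF u s z → C.gamma u ≤ s := by
    intro s z hz hf
    rw [hgam]
    exact csInf_le hbdd ⟨z, hz, hf⟩
  set G : Finset C.Chain := univ.filter (fun z : C.Chain => C.GenCycle z) with hG
  have hGne : G.Nonempty := ⟨z₀, mem_filter.mpr ⟨mem_univ _, hz₀⟩⟩
  set m : C.Chain → ℝ :=
    fun z => univ.sup' hBne (fun x => if z x = 0 then L else fval u (C.lev x)) with hm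
  have hm1 : ∀ z : C.Chain, C.inF u (m z) z := by
    intro z x hx
    have h := le_sup' (fun x => if z x = 0 then L else fval u (C.lev x)) (mem_univ x)
    rwa [if_neg hx] at h
  have hm2 : ∀ (z : C.Chain) (s : ℝ), C.GenCycle z → C.inF u s z → m z ≤ s := by
    intro z s hz hf
    obtain ⟨x', hx'⟩ := C.genCycle_ne_zero hz
    have hLs : L ≤ s := le_trans (inf'_le _ (mem_univ x')) (hf x' hx')
    refine sup'_le _ _ fun x _ => ?_
    by_cases h : z x = 0
    · rw [if_pos h]; exact hLs
    · rw [if_neg h]; exact hf x h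
  have hm3 : ∀ z : C.Chain, C.GenCycle z → ∃ x, z x ≠ 0 ∧ fval u (C.lev x) = m z := by
    intro z hz
    obtain ⟨x, -, hx⟩ :=
      exists_mem_eq_sup' hBne (fun x => if z x = 0 then L else fval u (C.lev x))
    by_cases h : z x = 0
    · obtain ⟨x', hx'⟩ := C.genCycle_ne_zero hz
      have h1 : fval u (C.lev x') ≤ m z := hm1 z x' hx'
      have h2 : L ≤ fval u (C.lev x') := inf'_le _ (mem_univ x')
      have hmL : m z = L := hx.trans (if_pos h)
      exact ⟨x', hx', le_antisymm h1 (hmL ▸ h2)⟩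
    · exact ⟨x, h, (hx.trans (if_neg h)).symm⟩
  obtain ⟨zmin, hzminG, hc⟩ := exists_mem_eq_inf' hGne m
  have hzmin : C.GenCycle zmin := (mem_filter.mp hzminG).2
  have hmemS : G.inf' hGne m ∈ {s : ℝ | ∃ z, C.GenCycle z ∧ C.inF u s z} :=
    ⟨zmin, hzmin, by rw [hc]; exact hm1 zmin⟩
  have hgamc : C.gamma u = G.inf' hGne m := by
    rw [hgam]
    refine le_antisymm (csInf_le hbdd hmemS) (le_csInf ⟨_, hmemS⟩ ?_)
    rintro s ⟨z, hz, hf⟩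
    exact le_trans (inf'_le m (mem_filter.mpr ⟨mem_univ _, hz⟩)) (hm2 z s hz hf)
  have part1 : ∃ z, C.GenCycle z ∧ C.inF u (C.gamma u) z := by
    rw [hgamc]; exact hmemS
  refine ⟨part1, part2, ?_⟩
  intro z hz hf
  have h1 : m z ≤ C.gamma u := hm2 z _ hz hf
  have h2 : C.gamma u ≤ m z := by
    rw [hgamc]; exact inf'_le m (mem_filter.mpr ⟨mem_univ _, hz⟩)
  obtain ⟨x, hx, hfx⟩ := hm3 z hz
  exact ⟨x, hx, hfx.trans (le_antisymm h1 h2)⟩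

/-- for all sufficiently small `δ > 0`, every cycle in `Z⁻`
contains a basis element at the bifiltration level of the negative pivot point
`p_t⁻`, and every cycle in `Z⁺` contains a basis element at the level of the
positive pivot point `p_t⁺`. -/
theorem cycles_contain_pivot (C : PreComplex) (hC : C.IsModel)
    (t : ℝ) (ht : t ∈ Set.Ioo (0 : ℝ) 2)
    (pm pp : ℤ × ℤ) (hpm : C.IsNegPivot t pm) (hpp : C.IsPosPivot t pp) :
    ∃ δ₀ > (0 : ℝ), ∀ δ : ℝ, 0 < δ → δ < δ₀ →
      (∀ z ∈ C.ZminusAt t δ, ∃ x, z x ≠ 0 ∧ C.lev x = pm) ∧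
      (∀ z ∈ C.ZplusAt t δ, ∃ x, z x ≠ 0 ∧ C.lev x = pp) := by
  classical
  open Finset in
  obtain ⟨δm, hδm0, hδm⟩ := hpm
  obtain ⟨δp, hδp0, hδp⟩ := hpp
  have hex : ∃ z, C.GenCycle z := hC.2.2.2.1
  obtain ⟨z₀, hz₀⟩ := hC.2.2.2.1
  obtain ⟨x₀, -⟩ := C.genCycle_ne_zero hz₀
  have hBne : (Finset.univ : Finset C.B).Nonempty := ⟨x₀, Finset.mem_univ _⟩
  set K : ℝ := Finset.univ.sup' hBne (fun x => |((C.alex x : ℝ) - (C.alg x : ℝ))| / 2)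
    with hKdef
  have hK0 : 0 ≤ K := by
    have h : |((C.alex x₀ : ℝ) - (C.alg x₀ : ℝ))| / 2 ≤ K := by
      rw [hKdef]
      exact Finset.le_sup' (fun x => |((C.alex x : ℝ) - (C.alg x : ℝ))| / 2) (Finset.mem_univ x₀)
    exact le_trans (by positivity) h
  have hfK : ∀ (u v : ℝ) (x : C.B),
      |fval u (C.lev x) - fval v (C.lev x)| ≤ K * |u - v| := by
    intro u v x
    have h1 : |((C.alex x : ℝ) - (C.alg x : ℝ))| / 2 ≤ K := by
      rw [hKdef]
      exact Finset.le_sup' (fun x => |((C.alex x : ℝ) - (C.alg x : ℝ))| / 2) (Finset.mem_univ x)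
    have heq : fval u (C.lev x) - fval v (C.lev x)
        = ((u - v) / 2) * (((C.alex x : ℝ)) - ((C.alg x : ℝ))) := by
      simp only [fval, PreComplex.lev]; ring
    calc |fval u (C.lev x) - fval v (C.lev x)|
        = |u - v| * (|((C.alex x : ℝ) - (C.alg x : ℝ))| / 2) := by
          rw [heq, abs_mul, abs_div, abs_two]; ring
      _ ≤ |u - v| * K := mul_le_mul_of_nonneg_left h1 (abs_nonneg _)
      _ = K * |u - v| := mul_comm _ _
  have hγK : ∀ u v : ℝ, C.gamma v ≤ C.gamma u + K * |u - v| := by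
    intro u v
    obtain ⟨z, hz, hf⟩ := (C.gamma_key hex u).1
    refine (C.gamma_key hex v).2.1 _ z hz ?_
    intro x hx
    have h1 := hf x hx
    have h2 : fval v (C.lev x) - fval u (C.lev x) ≤ K * |u - v| := by
      have := hfK v u x
      have h3 : |v - u| = |u - v| := abs_sub_comm _ _
      rw [h3] at this
      exact le_trans (le_abs_self _) this
    linarith
  set e : C.B → ℝ := fun x => fval t (C.lev x) - C.gamma t with he
  set δ₁ : ℝ := Finset.univ.inf' hBne
    (fun x => if e x = 0 then 1 else |e x| / (2 * K + 1)) with hδ₁def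
  have hδ₁pos : 0 < δ₁ := by
    rw [hδ₁def]
    rw [Finset.lt_inf'_iff]
    intro x _
    by_cases h : e x = 0
    · rw [if_pos h]; norm_num
    · rw [if_neg h]
      exact div_pos (abs_pos.mpr h) (by linarith)
  have hstab : ∀ u : ℝ, |u - t| < δ₁ → ∀ x : C.B,
      fval u (C.lev x) = C.gamma u → fval t (C.lev x) = C.gamma t := by
    intro u hu x hfx
    by_contra hne
    have hex0 : e x ≠ 0 := sub_ne_zero.mpr hne
    have hδle : δ₁ ≤ |e x| / (2 * K + 1) := by
      have := Finset.inf'_le (fun x => if e x = 0 then 1 else |e x| / (2 * K + 1))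
        (Finset.mem_univ x)
      rwa [if_neg hex0] at this
    have hb1 : |fval t (C.lev x) - fval u (C.lev x)| ≤ K * |u - t| := by
      have := hfK t u x
      rwa [abs_sub_comm t u] at this
    have hb2 : C.gamma u - C.gamma t ≤ K * |u - t| := by
      have := hγK t u
      rwa [abs_sub_comm t u, ← sub_le_iff_le_add'] at this
    have hb3 : C.gamma t - C.gamma u ≤ K * |u - t| := by
      have := hγK u t
      rwa [← sub_le_iff_le_add'] at this
    have hb4 : |e x| ≤ 2 * K * |u - t| := by
      have h5 : e x = (fval t (C.lev x) - fval u (C.lev x)) + (C.gamma u - C.gamma t) := by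
        rw [he]; simp only; rw [hfx]; ring
      rw [h5]
      calc |(fval t (C.lev x) - fval u (C.lev x)) + (C.gamma u - C.gamma t)|
          ≤ |fval t (C.lev x) - fval u (C.lev x)| + |C.gamma u - C.gamma t| := abs_add_le _ _
        _ ≤ K * |u - t| + K * |u - t| := by
            refine add_le_add hb1 (abs_le.mpr ⟨?_, hb2⟩)
            have := hb3
            nlinarith [abs_nonneg (u - t)]
        _ = 2 * K * |u - t| := by ring
    have hprod : δ₁ * (2 * K + 1) ≤ |e x| :=
      (le_div_iff₀ (by linarith)).mp hδle
    have hmul : 2 * K * |u - t| ≤ 2 * K * δ₁ :=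
      mul_le_mul_of_nonneg_left (le_of_lt hu) (by linarith)
    linarith
  refine ⟨min δm (min δp δ₁), by positivity, ?_⟩
  intro δ hδ0 hδlt
  have hδm' : δ < δm := lt_of_lt_of_le hδlt (min_le_left _ _)
  have hδp' : δ < δp := lt_of_lt_of_le hδlt (le_trans (min_le_right _ _) (min_le_left _ _))
  have hδ₁' : δ < δ₁ := lt_of_lt_of_le hδlt (le_trans (min_le_right _ _) (min_le_right _ _))
  constructor
  · intro z hz
    obtain ⟨hzgen, hzf⟩ := hz
    obtain ⟨x, hx, hfx⟩ := (C.gamma_key hex (t - δ)).2.2 z hzgen hzf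
    have habs : |t - δ - t| < δ₁ := by
      rw [show t - δ - t = -δ by ring, abs_neg, abs_of_pos hδ0]
      exact hδ₁'
    have hft : fval t (C.lev x) = C.gamma t := hstab (t - δ) habs x hfx
    have hmem : C.lev x ∈ C.Pt (t - δ) ∩ C.Pt t :=
      ⟨⟨⟨x, rfl⟩, hfx⟩, ⟨⟨x, rfl⟩, hft⟩⟩
    rw [hδm δ hδ0 hδm'] at hmem
    exact ⟨x, hx, hmem⟩
  · intro z hz
    obtain ⟨hzgen, hzf⟩ := hz
    obtain ⟨x, hx, hfx⟩ := (C.gamma_key hex (t + δ)).2.2 z hzgen hzf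
    have habs : |t + δ - t| < δ₁ := by
      rw [show t + δ - t = δ by ring, abs_of_pos hδ0]
      exact hδ₁'
    have hft : fval t (C.lev x) = C.gamma t := hstab (t + δ) habs x hfx
    have hmem : C.lev x ∈ C.Pt (t + δ) ∩ C.Pt t :=
      ⟨⟨⟨x, rfl⟩, hfx⟩, ⟨⟨x, rfl⟩, hft⟩⟩
    rw [hδp δ hδ0 hδp'] at hmem
    exact ⟨x, hx, hmem⟩
end

section
/- Let C be a model knot complex and let t ∈ (0,2). Then the jump of the derivative of Υ_C at t satisfies ΔΥ_C'(t) = (2/t)·( i(p_t⁺) − i(p_t⁻) ), where i(p) denotes the first coordinate of a lattice point p. In particular, Υ_C fails to be differentiable at t if and only if p_t⁻ ≠ p_t⁺. -/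
open scoped BigOperators

/-! On each side of `t`, `γ_C` agrees near `t` with `u ↦ f_u(p)` for the corresponding pivot
`p`, so `Υ_C` has one-sided derivatives `i(p_t^∓) − j(p_t^∓)`. Both pivots lie on the level line
`f_t = γ_C(t)`, which turns the difference of these slopes into `(2/t)·(i(p_t⁺) − i(p_t⁻))`; it
vanishes only when the two pivots coincide. -/

open Set Topology

section OneSidedDerivatives

variable {f : ℝ → ℝ} {t a b : ℝ}

theorem derivJump_eq_of_hasDerivWithinAt (ha : HasDerivWithinAt f a (Iic t) t)
    (hb : HasDerivWithinAt f b (Ici t) t) : derivJump f t = b - a := by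
  rw [derivJump, hb.derivWithin (uniqueDiffWithinAt_Ici t),
    ha.derivWithin (uniqueDiffWithinAt_Iic t)]

theorem differentiableAt_iff_of_hasDerivWithinAt (ha : HasDerivWithinAt f a (Iic t) t)
    (hb : HasDerivWithinAt f b (Ici t) t) : DifferentiableAt ℝ f t ↔ a = b := by
  constructor
  · intro hf
    calc a = deriv f t := (uniqueDiffWithinAt_Iic t).eq_deriv _ ha hf.hasDerivAt.hasDerivWithinAt
      _ = b := (uniqueDiffWithinAt_Ici t).eq_deriv _ hf.hasDerivAt.hasDerivWithinAt hb
  · rintro rfl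
    have h := ha.union hb
    rw [Iic_union_Ici, hasDerivWithinAt_univ] at h
    exact h.differentiableAt

end OneSidedDerivatives

theorem hasDerivAt_fval (p : ℤ × ℤ) (t : ℝ) :
    HasDerivAt (fun u => fval u p) (((p.2 : ℝ) - p.1) / 2) t := by
  have h : (fun u => fval u p) = fun u => ((p.2 : ℝ) - p.1) / 2 * u + p.1 := by
    funext u; simp only [fval]; ring
  rw [h]
  simpa using ((hasDerivAt_id t).const_mul (((p.2 : ℝ) - p.1) / 2)).add_const (p.1 : ℝ)

section Slopes

variable {t : ℝ} {p q : ℤ × ℤ}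

theorem sub_slope_eq_of_fval_eq (ht : t ≠ 0) (h : fval t p = fval t q) :
    ((q.1 : ℝ) - q.2) - (p.1 - p.2) = (2 / t) * (q.1 - p.1) := by
  simp only [fval] at h
  field_simp
  linarith

theorem slope_eq_iff_of_fval_eq (ht : t ≠ 0) (h : fval t p = fval t q) :
    ((p.1 : ℝ) - p.2 = q.1 - q.2) ↔ p = q := by
  refine ⟨fun hslope => ?_, by rintro rfl; rfl⟩
  have h1 : (q.1 : ℝ) = p.1 := by
    have := sub_slope_eq_of_fval_eq ht h
    rw [hslope, sub_self, eq_comm, mul_eq_zero, sub_eq_zero] at this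
    exact this.resolve_left (by positivity)
  have h2 : (q.2 : ℝ) = p.2 := by linarith
  exact Prod.ext (by exact_mod_cast h1.symm) (by exact_mod_cast h2.symm)

end Slopes

namespace PreComplex

variable {C : PreComplex} {t : ℝ} {p : ℤ × ℤ}

theorem fval_eq_gamma_of_inter_eq_singleton {u : ℝ} (h : C.Pt u ∩ C.Pt t = {p}) :
    fval u p = C.gamma u ∧ fval t p = C.gamma t := by
  have hp : p ∈ C.Pt u ∩ C.Pt t := h ▸ mem_singleton p
  exact ⟨hp.1.2, hp.2.2⟩

theorem IsNegPivot.gamma_eventuallyEq (h : C.IsNegPivot t p) :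
    C.gamma =ᶠ[𝓝[≤] t] fun u => fval u p := by
  obtain ⟨δ₀, hδ₀, hP⟩ := h
  filter_upwards [Ioc_mem_nhdsLE (show t - δ₀ < t by linarith)] with u ⟨hu₁, hu₂⟩
  rcases hu₂.lt_or_eq with hu₂ | rfl
  · have := (fval_eq_gamma_of_inter_eq_singleton (hP (t - u) (by linarith) (by linarith))).1
    rwa [sub_sub_cancel, eq_comm] at this
  · exact (fval_eq_gamma_of_inter_eq_singleton (hP (δ₀ / 2) (by linarith) (by linarith))).2.symm

theorem IsPosPivot.gamma_eventuallyEq (h : C.IsPosPivot t p) :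
    C.gamma =ᶠ[𝓝[≥] t] fun u => fval u p := by
  obtain ⟨δ₀, hδ₀, hP⟩ := h
  filter_upwards [Ico_mem_nhdsGE (show t < t + δ₀ by linarith)] with u ⟨hu₁, hu₂⟩
  rcases hu₁.lt_or_eq with hu₁ | rfl
  · have := (fval_eq_gamma_of_inter_eq_singleton (hP (u - t) (by linarith) (by linarith))).1
    rwa [add_sub_cancel, eq_comm] at this
  · exact (fval_eq_gamma_of_inter_eq_singleton (hP (δ₀ / 2) (by linarith) (by linarith))).2.symm

theorem hasDerivWithinAt_Upsilon_of_gamma_eventuallyEq {s : Set ℝ} (hs : t ∈ s)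
    (h : C.gamma =ᶠ[𝓝[s] t] fun u => fval u p) :
    HasDerivWithinAt C.Upsilon ((p.1 : ℝ) - p.2) s t := by
  have hγ := (hasDerivAt_fval p t).hasDerivWithinAt.congr_of_eventuallyEq h
    (h.eq_of_nhdsWithin hs)
  have hΥ := hγ.const_mul (-2)
  rwa [show -2 * (((p.2 : ℝ) - p.1) / 2) = p.1 - p.2 by ring] at hΥ

theorem IsNegPivot.hasDerivWithinAt_Upsilon (h : C.IsNegPivot t p) :
    HasDerivWithinAt C.Upsilon ((p.1 : ℝ) - p.2) (Iic t) t :=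
  hasDerivWithinAt_Upsilon_of_gamma_eventuallyEq self_mem_Iic h.gamma_eventuallyEq

theorem IsPosPivot.hasDerivWithinAt_Upsilon (h : C.IsPosPivot t p) :
    HasDerivWithinAt C.Upsilon ((p.1 : ℝ) - p.2) (Ici t) t :=
  hasDerivWithinAt_Upsilon_of_gamma_eventuallyEq self_mem_Ici h.gamma_eventuallyEq

theorem IsNegPivot.fval_eq_gamma (h : C.IsNegPivot t p) : fval t p = C.gamma t :=
  (h.gamma_eventuallyEq.eq_of_nhdsWithin self_mem_Iic).symm

theorem IsPosPivot.fval_eq_gamma (h : C.IsPosPivot t p) : fval t p = C.gamma t :=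
  (h.gamma_eventuallyEq.eq_of_nhdsWithin self_mem_Ici).symm

end PreComplex

theorem upsilon_jump_eq_general (C : PreComplex)
    (t : ℝ) (ht : t ∈ Set.Ioo (0 : ℝ) 2)
    (pm pp : ℤ × ℤ) (hpm : C.IsNegPivot t pm) (hpp : C.IsPosPivot t pp) :
    derivJump C.Upsilon t = (2 / t) * ((pp.1 : ℝ) - (pm.1 : ℝ)) ∧
    (¬ DifferentiableAt ℝ C.Upsilon t ↔ pm ≠ pp) := by
  have ht₀ : t ≠ 0 := ht.1.ne'
  have hleft := hpm.hasDerivWithinAt_Upsilon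
  have hright := hpp.hasDerivWithinAt_Upsilon
  have hlevel : fval t pm = fval t pp := hpm.fval_eq_gamma.trans hpp.fval_eq_gamma.symm
  rw [derivJump_eq_of_hasDerivWithinAt hleft hright, sub_slope_eq_of_fval_eq ht₀ hlevel,
    differentiableAt_iff_of_hasDerivWithinAt hleft hright, slope_eq_iff_of_fval_eq ht₀ hlevel]
  exact ⟨rfl, Iff.rfl⟩

/-- `ΔΥ_C'(t) = (2/t)·(i(p_t⁺) − i(p_t⁻))`; in particular `Υ_C`
fails to be differentiable at `t` if and only if `p_t⁻ ≠ p_t⁺`. -/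
theorem upsilon_jump_eq (C : PreComplex) (hC : C.IsModel)
    (t : ℝ) (ht : t ∈ Set.Ioo (0 : ℝ) 2)
    (pm pp : ℤ × ℤ) (hpm : C.IsNegPivot t pm) (hpp : C.IsPosPivot t pp) :
    derivJump C.Upsilon t = (2 / t) * ((pp.1 : ℝ) - (pm.1 : ℝ)) ∧
    (¬ DifferentiableAt ℝ C.Upsilon t ↔ pm ≠ pp) :=
  upsilon_jump_eq_general C t ht pm pp hpm hpp
end

section
/- Let C be a model knot complex and let t ∈ (0,2). If ΔΥ_C'(t) > 0, then the sets Z⁻ and Z⁺ are disjoint. -/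
open scoped BigOperators

open Finset Set Filter Topology

section AuxZpm

lemma Zpm_onesided {α : Type*} (s : Finset α) (hs : s.Nonempty) (v m : α → ℝ) :
    ∃ x₀ ∈ s, ∃ ε > (0:ℝ), ∀ d : ℝ, 0 ≤ d → d < ε → ∀ x ∈ s,
      v x + d * m x ≤ v x₀ + d * m x₀ := by
  classical
  set V := s.sup' hs v with hV
  have hA : (s.filter (fun x => v x = V)).Nonempty := by
    obtain ⟨b, hb, hbv⟩ := Finset.exists_mem_eq_sup' hs v
    exact ⟨b, Finset.mem_filter.2 ⟨hb, hbv.symm⟩⟩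
  obtain ⟨x₀, hx₀A, hx₀m⟩ := Finset.exists_mem_eq_sup' hA m
  have hx₀s : x₀ ∈ s := (Finset.mem_filter.1 hx₀A).1
  have hx₀v : v x₀ = V := (Finset.mem_filter.1 hx₀A).2
  set e : α → ℝ := fun x => if v x = V then 1 else (V - v x) / (|m x - m x₀| + 1) with he
  have hepos : ∀ x ∈ s, (0:ℝ) < e x := by
    intro x hx
    by_cases hxv : v x = V
    · simp [he, hxv]
    · have h1 : v x ≤ V := Finset.le_sup' v hx
      have h2 : v x < V := lt_of_le_of_ne h1 hxv
      simp only [he, hxv, if_false]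
      apply div_pos (by linarith) (by positivity)
  refine ⟨x₀, hx₀s, s.inf' hs e, (Finset.lt_inf'_iff hs).2 hepos, ?_⟩
  intro d hd0 hdε x hx
  by_cases hxv : v x = V
  · have hxA : x ∈ s.filter (fun x => v x = V) := Finset.mem_filter.2 ⟨hx, hxv⟩
    have hm : m x ≤ m x₀ := hx₀m ▸ Finset.le_sup' m hxA
    rw [hxv, hx₀v]
    nlinarith
  · have hvlt : v x < V := lt_of_le_of_ne (Finset.le_sup' v hx) hxv
    have hde : d ≤ e x := hdε.le.trans (Finset.inf'_le e hx)
    have hex : e x = (V - v x) / (|m x - m x₀| + 1) := if_neg hxv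
    rw [hex] at hde
    have h1 : d * (|m x - m x₀| + 1) ≤ V - v x := (le_div_iff₀ (by positivity)).1 hde
    have h2 : m x - m x₀ ≤ |m x - m x₀| := le_abs_self _
    have h3 : (0:ℝ) ≤ |m x - m x₀| := abs_nonneg _
    rw [hx₀v]
    nlinarith [mul_nonneg hd0 (sub_nonneg.2 h2)]

namespace PreComplex

variable (C : PreComplex)

/-- The support of a chain. -/
noncomputable def suppZ (z : C.Chain) : Finset C.B :=
  Finset.univ.filter (fun x => z x ≠ 0)

lemma mem_suppZ {z : C.Chain} {x : C.B} : x ∈ C.suppZ z ↔ z x ≠ 0 := by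
  simp [suppZ]

lemma suppZ_nonempty {z : C.Chain} (hz : C.GenCycle z) : (C.suppZ z).Nonempty := by
  by_contra h
  have hz0 : z = 0 := by
    funext x
    by_contra hx
    exact h ⟨x, (C.mem_suppZ).2 hx⟩
  apply hz.2.2
  refine ⟨0, ?_⟩
  rw [hz0]
  funext y
  simp [bdry]

/-- The filtration level function of a (nonzero) generating cycle. -/
noncomputable def gfun (z : C.Chain) (u : ℝ) : ℝ :=
  if h : (C.suppZ z).Nonempty then (C.suppZ z).sup' h (fun x => fval u (C.lev x)) else 0

lemma gfun_eq {z : C.Chain} (h : (C.suppZ z).Nonempty) (u : ℝ) :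
    C.gfun z u = (C.suppZ z).sup' h (fun x => fval u (C.lev x)) := dif_pos h

lemma inF_iff {z : C.Chain} (h : (C.suppZ z).Nonempty) {u s : ℝ} :
    C.inF u s z ↔ C.gfun z u ≤ s := by
  rw [C.gfun_eq h, Finset.sup'_le_iff]
  constructor
  · intro hin x hx; exact hin x ((C.mem_suppZ).1 hx)
  · intro hle x hx; exact hle x ((C.mem_suppZ).2 hx)

/-- The finset of generating cycles. -/
noncomputable def GSet : Finset C.Chain :=
  @Finset.filter _ C.GenCycle (Classical.decPred _) Finset.univ

lemma mem_GSet {z : C.Chain} : z ∈ C.GSet ↔ C.GenCycle z := by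
  classical
  simp [GSet]

lemma GSet_nonempty (hex : ∃ z : C.Chain, C.GenCycle z) : C.GSet.Nonempty := by
  obtain ⟨z, hz⟩ := hex
  exact ⟨z, (C.mem_GSet).2 hz⟩

lemma gamma_eq (hex : ∃ z : C.Chain, C.GenCycle z) (u : ℝ) :
    C.gamma u = C.GSet.inf' (C.GSet_nonempty hex) (fun z => C.gfun z u) := by
  unfold gamma
  have hset : {s : ℝ | ∃ z : C.Chain, C.GenCycle z ∧ C.inF u s z}
      = Set.Ici (C.GSet.inf' (C.GSet_nonempty hex) (fun z => C.gfun z u)) := by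
    ext s
    simp only [Set.mem_setOf_eq, Set.mem_Ici]
    constructor
    · rintro ⟨z, hz, hin⟩
      calc C.GSet.inf' (C.GSet_nonempty hex) (fun z => C.gfun z u)
          ≤ C.gfun z u := Finset.inf'_le _ ((C.mem_GSet).2 hz)
        _ ≤ s := (C.inF_iff (C.suppZ_nonempty hz)).1 hin
    · intro hs
      obtain ⟨z, hzG, hz⟩ :=
        Finset.exists_mem_eq_inf' (C.GSet_nonempty hex) (fun z => C.gfun z u)
      refine ⟨z, (C.mem_GSet).1 hzG, ?_⟩
      exact (C.inF_iff (C.suppZ_nonempty ((C.mem_GSet).1 hzG))).2 (by rw [← hz]; exact hs)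
  rw [hset, csInf_Ici]

lemma gamma_le (hex : ∃ z : C.Chain, C.GenCycle z) {z : C.Chain} (hz : C.GenCycle z)
    (u : ℝ) : C.gamma u ≤ C.gfun z u := by
  rw [C.gamma_eq hex u]
  exact Finset.inf'_le _ ((C.mem_GSet).2 hz)

lemma gfun_continuousAt {z : C.Chain} (h : (C.suppZ z).Nonempty) (t : ℝ) :
    ContinuousAt (fun u => C.gfun z u) t := by
  have hfun : (fun u => C.gfun z u)
      = fun u => (C.suppZ z).sup' h (fun x => fval u (C.lev x)) :=
    funext fun u => C.gfun_eq h u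
  rw [hfun]
  exact ContinuousAt.finset_sup'_apply h fun i _ => by
    unfold fval; fun_prop

lemma fval_affine (t u : ℝ) (x : C.B) :
    fval u (C.lev x) = fval t (C.lev x)
      + (u - t) * (((C.alex x : ℝ) - (C.alg x)) / 2) := by
  simp only [fval, lev]
  ring

end PreComplex

end AuxZpm

/-- if `ΔΥ_C'(t) > 0` then the sets `Z⁻` and `Z⁺` are disjoint. -/
theorem Zpm_disjoint (C : PreComplex) (hC : C.IsModel)
    (t : ℝ) (ht : t ∈ Set.Ioo (0 : ℝ) 2)
    (hjump : 0 < derivJump C.Upsilon t) :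
    C.Zminus t ∩ C.Zplus t = ∅ := by
  classical
  have hex : ∃ z : C.Chain, C.GenCycle z := hC.2.2.2.1
  rw [Set.eq_empty_iff_forall_notMem]
  rintro z ⟨hzm, hzp⟩
  obtain ⟨δ₁, hδ₁, h₁⟩ := hzm
  obtain ⟨δ₂, hδ₂, h₂⟩ := hzp
  set δ₀ := min δ₁ δ₂ with hδ₀def
  have hδ₀ : 0 < δ₀ := lt_min hδ₁ hδ₂
  have hδ₀₁ : δ₀ ≤ δ₁ := min_le_left _ _
  have hδ₀₂ : δ₀ ≤ δ₂ := min_le_right _ _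
  have hgen : C.GenCycle z := (h₁ (δ₀ / 2) (by linarith) (by linarith)).1
  have hsupp : (C.suppZ z).Nonempty := C.suppZ_nonempty hgen
  have hleft : ∀ δ : ℝ, 0 < δ → δ < δ₀ → C.gamma (t - δ) = C.gfun z (t - δ) := by
    intro δ hd1 hd2
    refine le_antisymm (C.gamma_le hex hgen _) ?_
    exact (C.inF_iff hsupp).1 (h₁ δ hd1 (lt_of_lt_of_le hd2 hδ₀₁)).2
  have hright : ∀ δ : ℝ, 0 < δ → δ < δ₀ → C.gamma (t + δ) = C.gfun z (t + δ) := by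
    intro δ hd1 hd2
    refine le_antisymm (C.gamma_le hex hgen _) ?_
    exact (C.inF_iff hsupp).1 (h₂ δ hd1 (lt_of_lt_of_le hd2 hδ₀₂)).2
  have hat : C.gamma t = C.gfun z t := by
    refine le_antisymm (C.gamma_le hex hgen t) ?_
    obtain ⟨w, hwG, hw⟩ :=
      Finset.exists_mem_eq_inf' (C.GSet_nonempty hex) (fun z => C.gfun z t)
    have hwgen : C.GenCycle w := (C.mem_GSet).1 hwG
    have hwsupp := C.suppZ_nonempty hwgen
    have hzw : C.gfun z t ≤ C.gfun w t := by
      have hztend : Filter.Tendsto (fun u => C.gfun z u) (nhdsWithin t (Set.Ioi t))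
          (nhds (C.gfun z t)) := (C.gfun_continuousAt hsupp t).continuousWithinAt
      have hwtend : Filter.Tendsto (fun u => C.gfun w u) (nhdsWithin t (Set.Ioi t))
          (nhds (C.gfun w t)) := (C.gfun_continuousAt hwsupp t).continuousWithinAt
      refine le_of_tendsto_of_tendsto hztend hwtend ?_
      filter_upwards [Ioo_mem_nhdsGT_of_mem
        (⟨le_refl t, by linarith⟩ : t ∈ Set.Ico t (t + δ₀))] with u hu
      have h1 : C.gamma u = C.gfun z u := by
        have hue : u = t + (u - t) := by ring
        rw [hue]; exact hright (u - t) (by linarith [hu.1]) (by linarith [hu.2])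
      rw [← h1]
      exact C.gamma_le hex hwgen u
    calc C.gfun z t ≤ C.gfun w t := hzw
      _ = C.gamma t := by rw [C.gamma_eq hex t]; exact hw.symm
  set v : C.B → ℝ := fun x => fval t (C.lev x) with hv
  set sl : C.B → ℝ := fun x => ((C.alex x : ℝ) - (C.alg x : ℝ)) / 2 with hsl
  obtain ⟨xp, hxps, εp, hεp, hdomp⟩ := Zpm_onesided (C.suppZ z) hsupp v sl
  obtain ⟨xm, hxms, εm, hεm, hdomm⟩ := Zpm_onesided (C.suppZ z) hsupp v (fun x => -sl x)
  have hgr : ∀ u : ℝ, t ≤ u → u < t + εp → C.gfun z u = v xp + (u - t) * sl xp := by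
    intro u h1 h2
    rw [C.gfun_eq hsupp]
    apply le_antisymm
    · apply Finset.sup'_le
      intro x hx
      rw [C.fval_affine t u x]
      exact hdomp (u - t) (by linarith) (by linarith) x hx
    · have hle := Finset.le_sup' (fun x => fval u (C.lev x)) hxps
      rw [C.fval_affine t u xp] at hle
      exact hle
  have hgl : ∀ u : ℝ, t - εm < u → u ≤ t → C.gfun z u = v xm + (u - t) * sl xm := by
    intro u h1 h2
    rw [C.gfun_eq hsupp]
    apply le_antisymm
    · apply Finset.sup'_le
      intro x hx
      rw [C.fval_affine t u x]
      have hd := hdomm (t - u) (by linarith) (by linarith) x hx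
      have he1 : v x + (t - u) * (-sl x) = v x + (u - t) * sl x := by ring
      have he2 : v xm + (t - u) * (-sl xm) = v xm + (u - t) * sl xm := by ring
      rw [he1, he2] at hd
      exact hd
    · have hle := Finset.le_sup' (fun x => fval u (C.lev x)) hxms
      rw [C.fval_affine t u xm] at hle
      exact hle
  have hvm_eq : v xm = v xp := by
    have hd1 : v xm + 0 * sl xm ≤ v xp + 0 * sl xp := hdomp 0 le_rfl hεp xm hxms
    have hd2 : v xp + 0 * (-sl xp) ≤ v xm + 0 * (-sl xm) := hdomm 0 le_rfl hεm xp hxps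
    have hd1' : v xm ≤ v xp := by linarith [hd1]
    have hd2' : v xp ≤ v xm := by linarith [hd2]
    linarith
  have hslle : sl xm ≤ sl xp := by
    have hd1 : v xm + (εp / 2) * sl xm ≤ v xp + (εp / 2) * sl xp :=
      hdomp (εp / 2) (by linarith) (by linarith) xm hxms
    nlinarith
  have hUright : derivWithin C.Upsilon (Set.Ici t) t = -2 * sl xp := by
    have hεp'0 : 0 < min εp δ₀ := lt_min hεp hδ₀
    have hev : C.Upsilon =ᶠ[nhdsWithin t (Set.Ici t)]
        (fun u => -2 * (v xp + (u - t) * sl xp)) := by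
      filter_upwards [mem_nhdsWithin_of_mem_nhds
        (Ioo_mem_nhds (show t - min εp δ₀ < t by linarith)
          (show t < t + min εp δ₀ by linarith)), self_mem_nhdsWithin] with u hu hu'
      have hut : t ≤ u := hu'
      have hgam : C.gamma u = C.gfun z u := by
        rcases eq_or_lt_of_le hut with h | h
        · rw [← h]; exact hat
        · have hue : u = t + (u - t) := by ring
          rw [hue]
          exact hright (u - t) (by linarith) (by linarith [hu.2, min_le_right εp δ₀])
      have hgru := hgr u hut (by linarith [hu.2, min_le_left εp δ₀])
      show -2 * C.gamma u = _
      rw [hgam, hgru]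
    have heq : C.Upsilon t = -2 * (v xp + (t - t) * sl xp) := by
      have hgrt := hgr t le_rfl (by linarith)
      show -2 * C.gamma t = _
      rw [hat, hgrt]
    rw [hev.derivWithin_eq heq]
    have hφ : HasDerivAt (fun u : ℝ => -2 * (v xp + (u - t) * sl xp)) (-2 * sl xp) t := by
      have h := ((hasDerivAt_id t).const_mul (-2 * sl xp)).add_const
        (-2 * v xp + 2 * t * sl xp)
      have hfun : (fun u : ℝ => -2 * (v xp + (u - t) * sl xp))
          = fun u => (-2 * sl xp) * u + (-2 * v xp + 2 * t * sl xp) := by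
        funext u; ring
      rw [hfun]
      simpa using h
    exact hφ.hasDerivWithinAt.derivWithin (uniqueDiffOn_Ici t t Set.self_mem_Ici)
  have hUleft : derivWithin C.Upsilon (Set.Iic t) t = -2 * sl xm := by
    have hεm'0 : 0 < min εm δ₀ := lt_min hεm hδ₀
    have hev : C.Upsilon =ᶠ[nhdsWithin t (Set.Iic t)]
        (fun u => -2 * (v xm + (u - t) * sl xm)) := by
      filter_upwards [mem_nhdsWithin_of_mem_nhds
        (Ioo_mem_nhds (show t - min εm δ₀ < t by linarith)
          (show t < t + min εm δ₀ by linarith)), self_mem_nhdsWithin] with u hu hu'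
      have hut : u ≤ t := hu'
      have hgam : C.gamma u = C.gfun z u := by
        rcases eq_or_lt_of_le hut with h | h
        · rw [h]; exact hat
        · have hue : u = t - (t - u) := by ring
          rw [hue]
          exact hleft (t - u) (by linarith) (by linarith [hu.1, min_le_right εm δ₀])
      have hglu := hgl u (by linarith [hu.1, min_le_left εm δ₀]) hut
      show -2 * C.gamma u = _
      rw [hgam, hglu]
    have heq : C.Upsilon t = -2 * (v xm + (t - t) * sl xm) := by
      have hglt := hgl t (by linarith) le_rfl
      show -2 * C.gamma t = _
      rw [hat, hglt]
    rw [hev.derivWithin_eq heq]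
    have hφ : HasDerivAt (fun u : ℝ => -2 * (v xm + (u - t) * sl xm)) (-2 * sl xm) t := by
      have h := ((hasDerivAt_id t).const_mul (-2 * sl xm)).add_const
        (-2 * v xm + 2 * t * sl xm)
      have hfun : (fun u : ℝ => -2 * (v xm + (u - t) * sl xm))
          = fun u => (-2 * sl xm) * u + (-2 * v xm + 2 * t * sl xm) := by
        funext u; ring
      rw [hfun]
      simpa using h
    exact hφ.hasDerivWithinAt.derivWithin (uniqueDiffOn_Iic t t Set.self_mem_Iic)
  unfold derivJump at hjump
  rw [hUright, hUleft] at hjump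
  linarith
end

section
/- Let C be a model knot complex and let A be an acyclic complex. Then for every t ∈ (0,2) and s ∈ [0,2], γ_{C⊕A}(t) = γ_C(t) and γ²_{C⊕A,t}(s) = γ²_{C,t}(s); consequently Υ_{C⊕A} = Υ_C and Υ²_{C⊕A,t}(s) = Υ²_{C,t}(s). That is, adding acyclic summands to a model knot complex does not change the value of Υ or of Υ². -/
open scoped BigOperators

/-! Chains of `C ⊕ A` are pairs `(c, a)` with `∂(c, a) = (∂c, ∂a)`, and `c` sits in the same
filtration levels as `(c, a)`. Hence both the inclusion `c ↦ (c, 0)` and the restriction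
`(c, a) ↦ c` preserve the filtration and boundary conditions defining `γ` and `γ²`. They also
preserve generators of `H₀`: if `(c, a)` is a generator then `a` is a cycle of the acyclic `A`,
so `a = ∂a'`, and `c = ∂w` would give `(c, a) = ∂(w, a')`. So the sets whose infima define `γ`
and `γ²` are the same for `C` and `C ⊕ A`. -/

lemma forall_support_sum_elim_zero {α β M : Type*} [Zero M] {P : α ⊕ β → Prop} {f : α → M}
    (h : ∀ x, f x ≠ 0 → P (Sum.inl x)) : ∀ x, Sum.elim f (0 : β → M) x ≠ 0 → P x
  | Sum.inl x, hx => h x hx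
  | Sum.inr _, hx => absurd rfl hx

namespace PreComplex

variable {C A : PreComplex}

lemma bdry_zero : C.bdry 0 = 0 := by
  funext y
  simp [bdry]

lemma bdry_dsum (Z : (C.dsum A).Chain) :
    (C.dsum A).bdry Z = Sum.elim (C.bdry (Z ∘ Sum.inl)) (A.bdry (Z ∘ Sum.inr)) := by
  funext y
  simp only [bdry]
  rw [show (∑ x : (C.dsum A).B, Z x * (C.dsum A).d x y) =
    ∑ x : C.B ⊕ A.B, Z x * (C.dsum A).d x y from rfl, Fintype.sum_sum_type]
  cases y <;> simp only [dsum, mul_zero, Finset.sum_const_zero, add_zero, zero_add, Sum.elim_inl,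
    Sum.elim_inr] <;> rfl

lemma bdry_dsum_elim (c : C.Chain) (a : A.Chain) :
    (C.dsum A).bdry (Sum.elim c a) = Sum.elim (C.bdry c) (A.bdry a) :=
  bdry_dsum (Sum.elim c a)

lemma bdry_comp_inl (W : (C.dsum A).Chain) :
    C.bdry (W ∘ Sum.inl) = (C.dsum A).bdry W ∘ Sum.inl := by
  rw [bdry_dsum]
  rfl

lemma genCycle_dsum_elim_zero {z : C.Chain} (hz : C.GenCycle z) :
    (C.dsum A).GenCycle (Sum.elim z 0) := by
  obtain ⟨hcyc, hgr, hnb⟩ := hz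
  refine ⟨?_, forall_support_sum_elim_zero hgr, fun ⟨W, hW⟩ => hnb ⟨W ∘ Sum.inl, ?_⟩⟩
  · show (C.dsum A).bdry (Sum.elim z 0) = 0
    rw [bdry_dsum_elim, hcyc, bdry_zero, Sum.elim_zero_zero]
    rfl
  · rw [bdry_comp_inl, hW]
    rfl

lemma genCycle_comp_inl (hA : ∀ a : A.Chain, A.isCycle a → A.isBoundary a)
    {Z : (C.dsum A).Chain} (hZ : (C.dsum A).GenCycle Z) : C.GenCycle (Z ∘ Sum.inl) := by
  obtain ⟨hcyc, hgr, hnb⟩ := hZ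
  obtain ⟨hcycC, hcycA⟩ : C.isCycle (Z ∘ Sum.inl) ∧ A.isCycle (Z ∘ Sum.inr) := by
    rw [isCycle, bdry_dsum] at hcyc
    exact ⟨funext fun y => congrFun hcyc (Sum.inl y), funext fun y => congrFun hcyc (Sum.inr y)⟩
  refine ⟨hcycC, fun x hx => hgr (Sum.inl x) hx, ?_⟩
  rintro ⟨w, hw⟩
  obtain ⟨a, ha⟩ := hA _ hcycA
  exact hnb ⟨Sum.elim w a, by rw [bdry_dsum_elim, hw, ha]; exact Sum.elim_comp_inl_inr Z⟩

lemma inF_dsum_elim_zero {t s : ℝ} {z : C.Chain} (h : C.inF t s z) :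
    (C.dsum A).inF t s (Sum.elim z 0) :=
  forall_support_sum_elim_zero h

lemma inF_comp_inl {t s : ℝ} {Z : (C.dsum A).Chain} (h : (C.dsum A).inF t s Z) :
    C.inF t s (Z ∘ Sum.inl) :=
  fun x hx => h (Sum.inl x) hx

theorem gamma_dsum (hA : ∀ a : A.Chain, A.isCycle a → A.isBoundary a) (t : ℝ) :
    (C.dsum A).gamma t = C.gamma t := by
  unfold gamma
  congr 1
  ext s
  constructor
  · rintro ⟨Z, hZ, hF⟩
    exact ⟨Z ∘ Sum.inl, genCycle_comp_inl hA hZ, inF_comp_inl hF⟩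
  · rintro ⟨z, hz, hF⟩
    exact ⟨Sum.elim z 0, genCycle_dsum_elim_zero hz, inF_dsum_elim_zero hF⟩

theorem upsilon_dsum (hA : ∀ a : A.Chain, A.isCycle a → A.isBoundary a) (t : ℝ) :
    (C.dsum A).Upsilon t = C.Upsilon t := by
  rw [Upsilon, Upsilon, gamma_dsum hA]

lemma genCycle_inF_gamma_comp_inl (hA : ∀ a : A.Chain, A.isCycle a → A.isBoundary a)
    {u : ℝ} {Z : (C.dsum A).Chain}
    (h : (C.dsum A).GenCycle Z ∧ (C.dsum A).inF u ((C.dsum A).gamma u) Z) :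
    C.GenCycle (Z ∘ Sum.inl) ∧ C.inF u (C.gamma u) (Z ∘ Sum.inl) :=
  ⟨genCycle_comp_inl hA h.1, by simpa only [gamma_dsum hA] using inF_comp_inl h.2⟩

lemma genCycle_inF_gamma_dsum_elim_zero (hA : ∀ a : A.Chain, A.isCycle a → A.isBoundary a)
    {u : ℝ} {z : C.Chain} (h : C.GenCycle z ∧ C.inF u (C.gamma u) z) :
    (C.dsum A).GenCycle (Sum.elim z 0) ∧
      (C.dsum A).inF u ((C.dsum A).gamma u) (Sum.elim z 0) :=
  ⟨genCycle_dsum_elim_zero h.1, by simpa only [gamma_dsum hA] using inF_dsum_elim_zero h.2⟩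

lemma inRegion_dsum_inl (hA : ∀ a : A.Chain, A.isCycle a → A.isBoundary a) {t s r : ℝ}
    (x : C.B) : (C.dsum A).inRegion t s r (Sum.inl x) ↔ C.inRegion t s r x := by
  unfold inRegion
  rw [gamma_dsum hA]
  rfl

lemma sameClass_comp_inl (hA : ∀ a : A.Chain, A.isCycle a → A.isBoundary a) {t s r : ℝ}
    {Z Z' : (C.dsum A).Chain} (h : (C.dsum A).sameClass t s r Z Z') :
    C.sameClass t s r (Z ∘ Sum.inl) (Z' ∘ Sum.inl) := by
  obtain ⟨hZ, hZ', W, hW, hbd⟩ := h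
  refine ⟨fun x hx => (inRegion_dsum_inl hA x).1 (hZ _ hx),
    fun x hx => (inRegion_dsum_inl hA x).1 (hZ' _ hx),
    W ∘ Sum.inl, fun x hx => (inRegion_dsum_inl hA x).1 (hW _ hx), ?_⟩
  rw [bdry_comp_inl, hbd]
  rfl

lemma sameClass_dsum_elim_zero (hA : ∀ a : A.Chain, A.isCycle a → A.isBoundary a)
    {t s r : ℝ} {z z' : C.Chain} (h : C.sameClass t s r z z') :
    (C.dsum A).sameClass t s r (Sum.elim z 0) (Sum.elim z' 0) := by
  obtain ⟨hz, hz', w, hw, hbd⟩ := h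
  refine ⟨forall_support_sum_elim_zero fun x hx => (inRegion_dsum_inl hA x).2 (hz x hx),
    forall_support_sum_elim_zero fun x hx => (inRegion_dsum_inl hA x).2 (hz' x hx),
    Sum.elim w 0,
    forall_support_sum_elim_zero fun x hx => (inRegion_dsum_inl hA x).2 (hw x hx), ?_⟩
  rw [bdry_dsum_elim, hbd, bdry_zero]
  have hsum := Sum.elim_add_add z z' (0 : A.Chain) 0
  rw [add_zero] at hsum
  exact hsum

theorem gamma2Set_dsum (hA : ∀ a : A.Chain, A.isCycle a → A.isBoundary a) (t s : ℝ) :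
    (C.dsum A).gamma2Set t s = C.gamma2Set t s := by
  ext r
  constructor
  · rintro ⟨Zm, ⟨δm, hδm, hZm⟩, Zp, ⟨δp, hδp, hZp⟩, hsame⟩
    exact ⟨Zm ∘ Sum.inl,
      ⟨δm, hδm, fun δ h₀ h₁ => genCycle_inF_gamma_comp_inl hA (hZm δ h₀ h₁)⟩,
      Zp ∘ Sum.inl,
      ⟨δp, hδp, fun δ h₀ h₁ => genCycle_inF_gamma_comp_inl hA (hZp δ h₀ h₁)⟩,
      sameClass_comp_inl hA hsame⟩
  · rintro ⟨zm, ⟨δm, hδm, hzm⟩, zp, ⟨δp, hδp, hzp⟩, hsame⟩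
    exact ⟨Sum.elim zm 0,
      ⟨δm, hδm, fun δ h₀ h₁ => genCycle_inF_gamma_dsum_elim_zero hA (hzm δ h₀ h₁)⟩,
      Sum.elim zp 0,
      ⟨δp, hδp, fun δ h₀ h₁ => genCycle_inF_gamma_dsum_elim_zero hA (hzp δ h₀ h₁)⟩,
      sameClass_dsum_elim_zero hA hsame⟩

theorem gamma2_dsum (hA : ∀ a : A.Chain, A.isCycle a → A.isBoundary a) (t s : ℝ) :
    (C.dsum A).gamma2 t s = C.gamma2 t s := by
  rw [gamma2, gamma2, gamma2Set_dsum hA]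

theorem upsilon2_dsum (hA : ∀ a : A.Chain, A.isCycle a → A.isBoundary a) (t s : ℝ) :
    (C.dsum A).Upsilon2 t s = C.Upsilon2 t s := by
  rw [Upsilon2, Upsilon2, gamma2_dsum hA, gamma_dsum hA]

end PreComplex

theorem acyclic_summand_invariance_general (C A : PreComplex)
    (hA : A.IsAcyclic) :
    (∀ t ∈ Set.Icc (0 : ℝ) 2,
        (C.dsum A).gamma t = C.gamma t ∧ (C.dsum A).Upsilon t = C.Upsilon t) ∧
    (∀ t ∈ Set.Ioo (0 : ℝ) 2, ∀ s ∈ Set.Icc (0 : ℝ) 2,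
        (C.dsum A).gamma2 t s = C.gamma2 t s ∧
        (C.dsum A).Upsilon2 t s = C.Upsilon2 t s) :=
  ⟨fun t _ => ⟨PreComplex.gamma_dsum hA.2.2 t, PreComplex.upsilon_dsum hA.2.2 t⟩,
    fun t _ s _ => ⟨PreComplex.gamma2_dsum hA.2.2 t s, PreComplex.upsilon2_dsum hA.2.2 t s⟩⟩

/-- adding an acyclic summand `A` to a model knot complex `C`
changes neither `γ` and `Υ`, nor `γ²` and `Υ²`. -/
theorem acyclic_summand_invariance (C A : PreComplex)
    (hC : C.IsModel) (hA : A.IsAcyclic) :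
    (∀ t ∈ Set.Icc (0 : ℝ) 2,
        (C.dsum A).gamma t = C.gamma t ∧ (C.dsum A).Upsilon t = C.Upsilon t) ∧
    (∀ t ∈ Set.Ioo (0 : ℝ) 2, ∀ s ∈ Set.Icc (0 : ℝ) 2,
        (C.dsum A).gamma2 t s = C.gamma2 t s ∧
        (C.dsum A).Upsilon2 t s = C.Upsilon2 t s) :=
  acyclic_summand_invariance_general C A hA
end
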